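/- Let (Y,Z) be a maximal cross-intersecting EKR set of generators in a finite classical polar space of rank d. If two distinct elements y₁, y₂ ∈ Y meet in a subspace of dimension d−1 (codimension 1 in each), then every element of Z meets y₁ ∩ y₂ in at least a point. -/

import Mathlib

/-!
If some `z ∈ Z` met `y₁ ⊓ y₂` trivially, pick nonzero `p₁ ∈ y₁ ⊓ z` and `p₂ ∈ y₂ ⊓ z`.
Then `y₁ ⊓ y₂ + ⟨p₁, p₂⟩` is totally isotropic of dimension `(d - 1) + 2 > d`.
-/

/-- A subspace is totally isotropic for the reflexive form `B`. -/
def TotallyIsotropic {F M : Type*} [Field F] [AddCommGroup M] [Module F M]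
    (B : M →ₗ[F] M →ₗ[F] F) (S : Submodule F M) : Prop :=
  ∀ x ∈ S, ∀ y ∈ S, B x y = 0

/-- A generator of a polar space of rank `d`: a totally isotropic subspace of dimension `d`. -/
def IsGenerator {F M : Type*} [Field F] [AddCommGroup M] [Module F M]
    (B : M →ₗ[F] M →ₗ[F] F) (d : ℕ) (S : Submodule F M) : Prop :=
  TotallyIsotropic B S ∧ Module.finrank F S = d

open Module Submodule

section

variable {F M : Type*} [Field F] [AddCommGroup M] [Module F M] {B : M →ₗ[F] M →ₗ[F] F}

theorem totallyIsotropic_span {s : Set M} (h : ∀ x ∈ s, ∀ y ∈ s, B x y = 0) :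
    TotallyIsotropic B (span F s) := by
  have hleft : ∀ x ∈ s, span F s ≤ LinearMap.ker (B x) := fun x hx =>
    span_le.mpr fun y hy => h x hx y hy
  have hright : ∀ y ∈ span F s, span F s ≤ LinearMap.ker (B.flip y) := fun y hy =>
    span_le.mpr fun x hx => hleft x hx hy
  exact fun x hx y hy => hright y hy hx

theorem one_le_of_isotropic_ne_zero {d : ℕ}
    (hrank : ∀ S : Submodule F M, TotallyIsotropic B S → finrank F S ≤ d)
    {p : M} (hp : B p p = 0) (hp0 : p ≠ 0) : 1 ≤ d := by
  have hline : TotallyIsotropic B (F ∙ p) := totallyIsotropic_span (by rintro _ rfl _ rfl; exact hp)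
  simpa only [finrank_span_singleton hp0] using hrank _ hline

theorem finrank_span_insert {s : Set M} [FiniteDimensional F (span F s)] {v : M}
    (hv : v ∉ span F s) : finrank F (span F (insert v s)) = finrank F (span F s) + 1 := by
  have hv0 : v ≠ 0 := fun h => hv (h ▸ zero_mem _)
  have hdisj : Disjoint (span F s) (F ∙ v) := (disjoint_span_singleton' hv0).mpr hv
  have hsum := finrank_sup_add_finrank_inf_eq (span F s) (F ∙ v)
  rw [hdisj.eq_bot, finrank_bot, add_zero, finrank_span_singleton hv0] at hsum
  rw [span_insert, sup_comm, hsum]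

theorem totallyIsotropic_span_insert_insert_inf {y₁ y₂ z : Submodule F M}
    (h₁ : TotallyIsotropic B y₁) (h₂ : TotallyIsotropic B y₂) (hz : TotallyIsotropic B z)
    {p₁ p₂ : M} (hp₁ : p₁ ∈ y₁ ⊓ z) (hp₂ : p₂ ∈ y₂ ⊓ z) :
    TotallyIsotropic B (span F (insert p₁ (insert p₂ (↑(y₁ ⊓ y₂) : Set M)))) := by
  obtain ⟨hp₁y, hp₁z⟩ := hp₁
  obtain ⟨hp₂y, hp₂z⟩ := hp₂
  refine totallyIsotropic_span ?_
  -- any two of `p₁`, `p₂` and a vector of `y₁ ⊓ y₂` lie together in one of `y₁`, `y₂`, `z`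
  rintro x (rfl | rfl | ⟨hx₁, hx₂⟩) y (rfl | rfl | ⟨hy₁, hy₂⟩)
  all_goals first
    | (apply h₁ <;> assumption)
    | (apply h₂ <;> assumption)
    | (apply hz <;> assumption)

theorem finrank_span_insert_insert {V W : Submodule F M} [FiniteDimensional F V] (hVW : V ≤ W)
    {p₁ p₂ : M} (hp₁ : p₁ ∉ W) (hp₂ : p₂ ∈ W) (hp₂V : p₂ ∉ V) :
    finrank F (span F (insert p₁ (insert p₂ (V : Set M)))) = finrank F V + 2 := by
  have : FiniteDimensional F (span F (V : Set M)) := by rwa [span_eq]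
  have : FiniteDimensional F (span F (insert p₂ (V : Set M))) := by
    rw [span_insert]; infer_instance
  have hp₁' : p₁ ∉ span F (insert p₂ (V : Set M)) := fun h =>
    hp₁ (span_le.mpr (Set.insert_subset hp₂ hVW) h)
  rw [finrank_span_insert hp₁', finrank_span_insert (by rwa [span_eq]), span_eq]

end

theorem maximal_cross_intersecting_meet_hyperplane_general
    (F M : Type*) [Field F] [AddCommGroup M] [Module F M]
    (B : M →ₗ[F] M →ₗ[F] F)
    (d : ℕ)
    (hrank : ∀ S : Submodule F M, TotallyIsotropic B S → Module.finrank F S ≤ d)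
    (Y Z : Set (Submodule F M))
    (hYgen : ∀ y ∈ Y, IsGenerator B d y) (hZgen : ∀ z ∈ Z, IsGenerator B d z)
    (hcross : ∀ y ∈ Y, ∀ z ∈ Z, y ⊓ z ≠ ⊥)
    (y₁ y₂ : Submodule F M) (hy₁ : y₁ ∈ Y) (hy₂ : y₂ ∈ Y)
    (hmeet : Module.finrank F ↥(y₁ ⊓ y₂) = d - 1) :
    ∀ z ∈ Z, z ⊓ (y₁ ⊓ y₂) ≠ ⊥ := by
  intro z hz hbot
  obtain ⟨hy₁iso, hy₁rk⟩ := hYgen y₁ hy₁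
  have hziso := (hZgen z hz).1
  obtain ⟨p₁, hp₁, hp₁0⟩ := (Submodule.ne_bot_iff _).mp (hcross y₁ hy₁ z hz)
  obtain ⟨p₂, hp₂, hp₂0⟩ := (Submodule.ne_bot_iff _).mp (hcross y₂ hy₂ z hz)
  have hnot_mem_inf : ∀ p ∈ z, p ≠ 0 → p ∉ y₁ ⊓ y₂ := fun p hp hp0 hpV =>
    hp0 (disjoint_def.mp (disjoint_iff.mpr hbot) p hp hpV)
  have hp₁y₂ : p₁ ∉ y₂ := fun h => hnot_mem_inf p₁ hp₁.2 hp₁0 ⟨hp₁.1, h⟩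
  have hd : 1 ≤ d := one_le_of_isotropic_ne_zero hrank (hziso _ hp₁.2 _ hp₁.2) hp₁0
  have : FiniteDimensional F y₁ := Module.finite_of_finrank_pos (by omega)
  have : FiniteDimensional F ↥(y₁ ⊓ y₂) := finiteDimensional_of_le inf_le_left
  have hW := hrank _
    (totallyIsotropic_span_insert_insert_inf hy₁iso (hYgen y₂ hy₂).1 hziso hp₁ hp₂)
  rw [finrank_span_insert_insert inf_le_right hp₁y₂ hp₂.1 (hnot_mem_inf p₂ hp₂.2 hp₂0)] at hW
  omega

/-- Let `(Y, Z)` be a maximal cross-intersecting EKR set of generators in a polar space of rank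
`d` (every totally isotropic subspace has dimension at most `d`). If two distinct `y₁, y₂ ∈ Y`
meet in a subspace of dimension `d−1`, then every `z ∈ Z` meets `y₁ ⊓ y₂` nontrivially. -/
theorem maximal_cross_intersecting_meet_hyperplane
    (F M : Type*) [Field F] [AddCommGroup M] [Module F M]
    (B : M →ₗ[F] M →ₗ[F] F) (hrefl : ∀ x y, B x y = 0 → B y x = 0)
    (d : ℕ)
    (hrank : ∀ S : Submodule F M, TotallyIsotropic B S → Module.finrank F S ≤ d)
    (Y Z : Set (Submodule F M))
    (hYgen : ∀ y ∈ Y, IsGenerator B d y) (hZgen : ∀ z ∈ Z, IsGenerator B d z)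
    (hcross : ∀ y ∈ Y, ∀ z ∈ Z, y ⊓ z ≠ ⊥)
    (hmaxY : ∀ g : Submodule F M, IsGenerator B d g → (∀ z ∈ Z, g ⊓ z ≠ ⊥) → g ∈ Y)
    (hmaxZ : ∀ g : Submodule F M, IsGenerator B d g → (∀ y ∈ Y, y ⊓ g ≠ ⊥) → g ∈ Z)
    (y₁ y₂ : Submodule F M) (hy₁ : y₁ ∈ Y) (hy₂ : y₂ ∈ Y) (hne : y₁ ≠ y₂)
    (hmeet : Module.finrank F ↥(y₁ ⊓ y₂) = d - 1) :
    ∀ z ∈ Z, z ⊓ (y₁ ⊓ y₂) ≠ ⊥ :=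
  maximal_cross_intersecting_meet_hyperplane_general F M B d hrank Y Z hYgen hZgen hcross y₁ y₂ hy₁
    hy₂ hmeet
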